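/- arXiv:2310.09879 — 2 statements merged into one kernel-verified Lean document; each statement's English description precedes it below -/
import Mathlib

section
/- Let Ω be a finite set with |Ω| ≥ 3 and let Π be a nontrivial partition of Ω, i.e. there exists E* ∈ Π with 1 < |E*| < |Ω|. Then a distorted belief φ : Δ(Ω) → Δ(Ω) satisfies positivity, continuity, coherency and Π-marginality if and only if φ is power-weighted with parameters ψ and α where α = 1 and ψ is Π-measurable (i.e. ψ is constant on each cell of Π). -/
open Finset

/-- `p` is a probability distribution on the finite set `Ω`. -/
def IsDist {Ω : Type*} [Fintype Ω] (p : Ω → ℝ) : Prop :=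
  (∀ ω, 0 ≤ p ω) ∧ ∑ ω, p ω = 1

/-- The conditional distribution `p(·|E)` of `p` given the event `E`. -/
noncomputable def condOn {Ω : Type*} [Fintype Ω] [DecidableEq Ω]
    (p : Ω → ℝ) (E : Finset Ω) : Ω → ℝ :=
  fun ω => if ω ∈ E then p ω / ∑ ω' ∈ E, p ω' else 0

/-- A distorted belief is positive if `φ(p)(E) = 0` iff `p(E) = 0`. -/
def PositiveBelief {Ω : Type*} [Fintype Ω] (φ : (Ω → ℝ) → Ω → ℝ) : Prop :=
  ∀ p, IsDist p → ∀ E : Finset Ω, (∑ ω ∈ E, φ p ω = 0 ↔ ∑ ω ∈ E, p ω = 0)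

/-- A distorted belief is coherent if distortion commutes with conditioning. -/
def CoherentBelief {Ω : Type*} [Fintype Ω] [DecidableEq Ω] (φ : (Ω → ℝ) → Ω → ℝ) : Prop :=
  ∀ p, IsDist p → ∀ E : Finset Ω, 0 < ∑ ω ∈ E, p ω →
    φ (condOn p E) = condOn (φ p) E

/-- `φ` is a power-weighted distorted belief with weights `ψ` and power `α`. -/
def IsPowerWeighted {Ω : Type*} [Fintype Ω] (φ : (Ω → ℝ) → Ω → ℝ)
    (ψ : Ω → ℝ) (α : ℝ) : Prop :=
  (∀ ω, 0 < ψ ω) ∧ 0 < α ∧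
    ∀ p, IsDist p → ∀ ω, φ p ω = ψ ω * p ω ^ α / ∑ ω', ψ ω' * p ω' ^ α

/-- `φ` is `Π`-marginal: if `p` and `p'` assign the same probability to every cell of
the partition `Π`, then so do `φ(p)` and `φ(p')`. -/
def PiMarginal {Ω : Type*} [Fintype Ω] [DecidableEq Ω]
    (P : Finpartition (Finset.univ : Finset Ω)) (φ : (Ω → ℝ) → Ω → ℝ) : Prop :=
  ∀ p p' : Ω → ℝ, IsDist p → IsDist p' →
    (∀ E ∈ P.parts, ∑ ω ∈ E, p ω = ∑ ω ∈ E, p' ω) →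
    ∀ E ∈ P.parts, ∑ ω ∈ E, φ p ω = ∑ ω ∈ E, φ p' ω

/-!
Coherence makes the odds `φ(p)(a) : φ(p)(b)` a function `ρ_ab` of the odds `p(a) : p(b)` alone,
and comparing the three pairs of a three-point distribution gives the chain rule
`ρ_ac(ts) = ρ_ab(t) ρ_bc(s)`. If `a ≠ b` lie in a cell `E` and `c ∉ E`, moving mass between `a`
and `b` changes neither the belief in `E` nor the belief in `c`, so
`ρ_ac(u + v) = ρ_ac(u) + ρ_bc(v)`. Hence `ρ_ac = ρ_bc` solves Cauchy's equation and, being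
positive, is linear; the chain rule spreads linearity to every pair, so `φ(p) ∝ ψ p` with
`ψ = φ(uniform)`, and `ρ_ac = ρ_bc` makes `ψ` constant on cells. Conversely, the belief such a
`φ` puts on a cell `E` is `ψ_E p(E) / ∑_F ψ_F p(F)`.
-/

/-- Positivity makes `f` monotone, and a monotone additive function is linear on the rationals,
hence everywhere. -/
theorem eq_mul_apply_one_of_add_of_pos {f : ℝ → ℝ}
    (hadd : ∀ u v, 0 < u → 0 < v → f (u + v) = f u + f v) (hpos : ∀ u, 0 < u → 0 < f u)
    {x : ℝ} (hx : 0 < x) : f x = x * f 1 := by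
  have hmono : ∀ u v, 0 < u → u < v → f u < f v := fun u v hu huv => by
    have h := hadd u (v - u) hu (sub_pos.2 huv)
    rw [add_sub_cancel] at h
    linarith [hpos (v - u) (sub_pos.2 huv)]
  have hnsmul : ∀ n : ℕ, 1 ≤ n → ∀ u, 0 < u → f (n * u) = n * f u := by
    intro n hn u hu
    induction n, hn using Nat.le_induction with
    | base => simp
    | succ n hn ih =>
      rw [Nat.cast_succ, add_mul, one_mul, hadd _ _ (by positivity) hu, ih, add_mul, one_mul]
  have hrat : ∀ q : ℚ, 0 < q → f q = q * f 1 := by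
    intro q hq
    have hnum : ((q.num.toNat : ℕ) : ℝ) = q.den * q := by
      have h : (q.num.toNat : ℤ) = q.num := Int.toNat_of_nonneg (Rat.num_pos.2 hq).le
      have h' : (q.num : ℝ) = q * q.den := by exact_mod_cast (Rat.mul_den_eq_num q).symm
      rw [mul_comm, ← h']
      exact_mod_cast h
    have hden : (0 : ℝ) < q.den := by exact_mod_cast q.den_pos
    have h := hnsmul q.num.toNat (by have := Rat.num_pos.2 hq; omega) 1 one_pos
    rw [mul_one, hnum, hnsmul q.den q.den_pos _ (by exact_mod_cast hq)] at h
    exact mul_left_cancel₀ hden.ne' (by rw [h]; ring)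
  have hf1 := hpos 1 one_pos
  apply le_antisymm
  · rw [← div_le_iff₀ hf1]
    refine le_of_forall_lt_rat_imp_le fun q hq => ?_
    have hq0 : (0 : ℝ) < q := hx.trans hq
    rw [div_le_iff₀ hf1, ← hrat q (by exact_mod_cast hq0)]
    exact (hmono x q hx hq).le
  · rw [← le_div_iff₀ hf1]
    refine le_of_forall_rat_lt_imp_le fun q hq => ?_
    rcases le_or_gt (q : ℝ) 0 with hq0 | hq0
    · exact hq0.trans (div_pos (hpos x hx) hf1).le
    · rw [le_div_iff₀ hf1, ← hrat q (by exact_mod_cast hq0)]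
      exact (hmono q x hq0 hq).le

lemma single_add_single_nonneg {Ω : Type*} [DecidableEq Ω] {a b : Ω} {s t : ℝ} (hs : 0 ≤ s)
    (ht : 0 ≤ t) : 0 ≤ (Pi.single a s + Pi.single b t : Ω → ℝ) :=
  add_nonneg (Pi.single_nonneg.2 hs) (Pi.single_nonneg.2 ht)

lemma sum_single_add_single_eq_sum_single {Ω : Type*} [DecidableEq Ω] {a b : Ω}
    {F : Finset Ω} (h : a ∈ F ↔ b ∈ F) (x y z : ℝ) (c : Ω) :
    ∑ ω ∈ F, (Pi.single a x + Pi.single b y + Pi.single c z : Ω → ℝ) ω =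
      ∑ ω ∈ F, (Pi.single a (x + y) + Pi.single c z : Ω → ℝ) ω := by
  simp only [Pi.add_apply, sum_add_distrib, sum_pi_single']
  by_cases ha : a ∈ F
  · simp [ha, h.1 ha]
  · simp [ha, mt h.2 ha]

lemma Finpartition.sum_sum_parts {α M : Type*} [DecidableEq α] [AddCommMonoid M]
    {s : Finset α} (P : Finpartition s) (f : α → M) :
    ∑ t ∈ P.parts, ∑ a ∈ t, f a = ∑ a ∈ s, f a := by
  conv_rhs => rw [← P.biUnion_parts]
  exact (sum_biUnion P.supIndep.pairwiseDisjoint).symm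

lemma Finpartition.exists_notMem_of_card_lt {Ω : Type*} [Fintype Ω] [DecidableEq Ω]
    {P : Finpartition (univ : Finset Ω)} {E₀ : Finset Ω} (hE₀ : E₀ ∈ P.parts)
    (hcard : E₀.card < Fintype.card Ω) {E : Finset Ω} (hE : E ∈ P.parts) : ∃ c, c ∉ E := by
  by_contra! h
  obtain ⟨a, ha⟩ := P.nonempty_of_mem_parts hE₀
  rw [P.eq_of_mem_parts hE₀ hE ha (h a), eq_univ_of_forall h, card_univ] at hcard
  exact hcard.false

lemma eq_div_sum_of_mul_eq_mul {Ω : Type*} [Fintype Ω] {q w : Ω → ℝ} (hq : ∑ ω, q ω = 1)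
    (hw : ∑ ω, w ω ≠ 0) (h : ∀ a b, q a * w b = q b * w a) (a : Ω) :
    q a = w a / ∑ ω, w ω := by
  rw [eq_div_iff hw, mul_sum]
  calc ∑ b, q a * w b = ∑ b, q b * w a := sum_congr rfl fun b _ => h a b
    _ = w a := by rw [← sum_mul, hq, one_mul]

section Distributions

variable {Ω : Type*} [Fintype Ω]

lemma IsDist.exists_pos {p : Ω → ℝ} (hp : IsDist p) : ∃ ω, 0 < p ω := by
  by_contra! h
  have : ∑ ω, p ω = 0 := sum_eq_zero fun ω _ => le_antisymm (h ω) (hp.1 ω)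
  linarith [hp.2]

noncomputable def ofWeights (w : Ω → ℝ) : Ω → ℝ := fun ω => w ω / ∑ x, w x

lemma sum_weights_pos {w : Ω → ℝ} (hw : 0 ≤ w) {a : Ω} (ha : 0 < w a) : 0 < ∑ x, w x :=
  sum_pos' (fun ω _ => hw ω) ⟨a, mem_univ a, ha⟩

lemma isDist_ofWeights {w : Ω → ℝ} (hw : 0 ≤ w) (hsum : 0 < ∑ x, w x) :
    IsDist (ofWeights w) :=
  ⟨fun ω => div_nonneg (hw ω) hsum.le, by simp only [ofWeights, ← sum_div, div_self hsum.ne']⟩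

lemma isDist_ofWeights_one [Nonempty Ω] : IsDist (ofWeights (1 : Ω → ℝ)) :=
  isDist_ofWeights zero_le_one (sum_weights_pos zero_le_one (a := Classical.arbitrary Ω) one_pos)

lemma ofWeights_pos {w : Ω → ℝ} (hw : 0 ≤ w) {a : Ω} (ha : 0 < w a) : 0 < ofWeights w a :=
  div_pos ha (sum_weights_pos hw ha)

lemma sum_ofWeights (w : Ω → ℝ) (E : Finset Ω) :
    ∑ ω ∈ E, ofWeights w ω = (∑ ω ∈ E, w ω) / ∑ x, w x :=
  (sum_div ..).symm

lemma ofWeights_div_ofWeights {w : Ω → ℝ} (hsum : ∑ x, w x ≠ 0) (a b : Ω) :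
    ofWeights w a / ofWeights w b = w a / w b :=
  div_div_div_cancel_right₀ hsum _ _

variable [DecidableEq Ω]

lemma IsDist.condOn {p : Ω → ℝ} (hp : IsDist p) {E : Finset Ω} (hE : 0 < ∑ ω ∈ E, p ω) :
    IsDist (condOn p E) := by
  refine ⟨fun ω => ?_, ?_⟩
  · unfold _root_.condOn
    split_ifs
    exacts [div_nonneg (hp.1 ω) hE.le, le_rfl]
  · simp only [_root_.condOn]
    rw [sum_ite_mem, univ_inter, ← sum_div, div_self hE.ne']

lemma condOn_div_condOn {w : Ω → ℝ} {E : Finset Ω} (hE : ∑ ω ∈ E, w ω ≠ 0) {a b : Ω}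
    (ha : a ∈ E) (hb : b ∈ E) : condOn w E a / condOn w E b = w a / w b := by
  simp only [condOn, ha, hb, if_true, div_div_div_cancel_right₀ hE]

lemma condOn_pair_eq_of_mul_eq {p q : Ω → ℝ} {a b : Ω} (hab : a ≠ b) (hp : p a + p b ≠ 0)
    (hq : q a + q b ≠ 0) (h : p a * q b = p b * q a) : condOn p {a, b} = condOn q {a, b} := by
  funext x
  simp only [condOn, sum_pair hab, mem_insert, mem_singleton]
  rcases eq_or_ne x a with rfl | hxa
  · simp only [true_or, if_true]
    rw [div_eq_div_iff hp hq]
    linear_combination h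
  · rcases eq_or_ne x b with rfl | hxb
    · simp only [or_true, if_true]
      rw [div_eq_div_iff hp hq]
      linear_combination -h
    · simp [hxa, hxb]

end Distributions

namespace IsPowerWeighted

variable {Ω : Type*} [Fintype Ω] {φ : (Ω → ℝ) → Ω → ℝ} {ψ : Ω → ℝ} {α : ℝ}

lemma sum_pos (h : IsPowerWeighted φ ψ α) {p : Ω → ℝ} (hp : IsDist p) :
    0 < ∑ ω, ψ ω * p ω ^ α := by
  obtain ⟨ω₀, hω₀⟩ := hp.exists_pos
  exact sum_weights_pos (fun ω => mul_nonneg (h.1 ω).le (Real.rpow_nonneg (hp.1 ω) α))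
    (mul_pos (h.1 ω₀) (Real.rpow_pos_of_pos hω₀ α))

lemma sum_apply (h : IsPowerWeighted φ ψ α) {p : Ω → ℝ} (hp : IsDist p) (E : Finset Ω) :
    ∑ ω ∈ E, φ p ω = (∑ ω ∈ E, ψ ω * p ω ^ α) / ∑ ω, ψ ω * p ω ^ α := by
  rw [sum_div]
  exact sum_congr rfl fun ω _ => h.2.2 p hp ω

lemma positiveBelief (h : IsPowerWeighted φ ψ α) : PositiveBelief φ := by
  intro p hp E
  rw [h.sum_apply hp E, div_eq_zero_iff, or_iff_left (h.sum_pos hp).ne',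
    sum_eq_zero_iff_of_nonneg fun ω _ => mul_nonneg (h.1 ω).le (Real.rpow_nonneg (hp.1 ω) α),
    sum_eq_zero_iff_of_nonneg fun ω _ => hp.1 ω]
  refine forall₂_congr fun ω _ => ?_
  rw [mul_eq_zero, or_iff_right (h.1 ω).ne', Real.rpow_eq_zero (hp.1 ω) h.2.1.ne']

lemma continuousOn (h : IsPowerWeighted φ ψ α) : ContinuousOn φ {p | IsDist p} := by
  have hpow : ∀ ω, ContinuousOn (fun p : Ω → ℝ => ψ ω * p ω ^ α) {p | IsDist p} := fun ω =>
    continuousOn_const.mul <|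
      (continuous_apply ω).continuousOn.rpow_const fun _ _ => Or.inr h.2.1.le
  refine ContinuousOn.congr (f := fun p ω => ψ ω * p ω ^ α / ∑ ω', ψ ω' * p ω' ^ α) ?_
    fun p hp => funext (h.2.2 p hp)
  exact continuousOn_pi.2 fun ω => (hpow ω).div (continuousOn_finsetSum _ fun ω' _ => hpow ω')
    fun p hp => (h.sum_pos hp).ne'

lemma coherentBelief [DecidableEq Ω] (h : IsPowerWeighted φ ψ α) : CoherentBelief φ := by
  intro p hp E hE
  have hpow : ∀ ω, condOn p E ω ^ α = if ω ∈ E then p ω ^ α / (∑ ω ∈ E, p ω) ^ α else 0 := by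
    intro ω
    unfold _root_.condOn
    split_ifs
    exacts [Real.div_rpow (hp.1 ω) hE.le α, Real.zero_rpow h.2.1.ne']
  have hsum : ∑ ω, ψ ω * condOn p E ω ^ α =
      (∑ ω ∈ E, ψ ω * p ω ^ α) / (∑ ω ∈ E, p ω) ^ α := by
    simp only [hpow, mul_ite, mul_zero, sum_ite_mem, univ_inter, sum_div, mul_div_assoc]
  have hT : ∑ ω ∈ E, ψ ω * p ω ^ α ≠ 0 := by
    refine (div_ne_zero_iff.1 (?_ : _ / ∑ ω, ψ ω * p ω ^ α ≠ 0)).1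
    rw [← h.sum_apply hp E]
    exact fun h0 => hE.ne' ((h.positiveBelief p hp E).1 h0)
  have hS := (Real.rpow_pos_of_pos hE α).ne'
  have hD := (h.sum_pos hp).ne'
  funext ω
  rw [h.2.2 _ (hp.condOn hE), hsum, hpow]
  simp only [_root_.condOn]
  rw [h.sum_apply hp E]
  split_ifs
  · rw [h.2.2 p hp ω]
    field_simp
  · simp

lemma piMarginal [DecidableEq Ω] {P : Finpartition (univ : Finset Ω)}
    (h : IsPowerWeighted φ ψ 1) (hψ : ∀ E ∈ P.parts, ∀ ω ∈ E, ∀ ω' ∈ E, ψ ω = ψ ω') :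
    PiMarginal P φ := by
  intro p p' hp hp' hcells
  have hcell : ∀ F ∈ P.parts, ∑ ω ∈ F, ψ ω * p ω ^ (1 : ℝ) = ∑ ω ∈ F, ψ ω * p' ω ^ (1 : ℝ) := by
    intro F hF
    obtain ⟨ω₀, hω₀⟩ := P.nonempty_of_mem_parts hF
    have hconst : ∀ q : Ω → ℝ, ∑ ω ∈ F, ψ ω * q ω ^ (1 : ℝ) = ψ ω₀ * ∑ ω ∈ F, q ω := fun q => by
      rw [mul_sum]
      exact sum_congr rfl fun ω hω => by rw [Real.rpow_one, hψ F hF ω hω ω₀ hω₀]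
    rw [hconst, hconst, hcells F hF]
  intro E hE
  rw [h.sum_apply hp, h.sum_apply hp', hcell E hE, ← P.sum_sum_parts, ← P.sum_sum_parts,
    sum_congr rfl hcell]

end IsPowerWeighted

section Ratio

variable {Ω : Type*} [Fintype Ω] {φ : (Ω → ℝ) → Ω → ℝ}

lemma PositiveBelief.apply_eq_zero_iff (hpos : PositiveBelief φ) {p : Ω → ℝ} (hp : IsDist p)
    (ω : Ω) : φ p ω = 0 ↔ p ω = 0 := by
  simpa using hpos p hp {ω}

lemma PositiveBelief.sum_apply_pos (hpos : PositiveBelief φ)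
    (hmap : ∀ p, IsDist p → IsDist (φ p)) {p : Ω → ℝ} (hp : IsDist p) {E : Finset Ω}
    (hE : 0 < ∑ ω ∈ E, p ω) : 0 < ∑ ω ∈ E, φ p ω :=
  (sum_nonneg fun ω _ => (hmap p hp).1 ω).lt_of_ne fun h => hE.ne' ((hpos p hp E).1 h.symm)

lemma PositiveBelief.apply_pos (hpos : PositiveBelief φ)
    (hmap : ∀ p, IsDist p → IsDist (φ p)) {p : Ω → ℝ} (hp : IsDist p) {ω : Ω}
    (hω : 0 < p ω) : 0 < φ p ω := by
  simpa using hpos.sum_apply_pos hmap hp (E := {ω}) (by simpa using hω)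

lemma PositiveBelief.sum_apply_eq_of_subset (hpos : PositiveBelief φ) {p : Ω → ℝ}
    (hp : IsDist p) {S T : Finset Ω} (hST : S ⊆ T) (hzero : ∀ ω ∈ T, ω ∉ S → p ω = 0) :
    ∑ ω ∈ S, φ p ω = ∑ ω ∈ T, φ p ω :=
  sum_subset hST fun ω hωT hωS => (hpos.apply_eq_zero_iff hp ω).2 (hzero ω hωT hωS)

variable [DecidableEq Ω]

lemma CoherentBelief.div_eq_div (hcoh : CoherentBelief φ) (hpos : PositiveBelief φ)
    (hmap : ∀ p, IsDist p → IsDist (φ p)) {p q : Ω → ℝ} (hp : IsDist p) (hq : IsDist q)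
    {a b : Ω} (hab : a ≠ b) (hpab : 0 < p a + p b) (hqab : 0 < q a + q b)
    (h : p a * q b = p b * q a) : φ p a / φ p b = φ q a / φ q b := by
  have ha : a ∈ ({a, b} : Finset Ω) := mem_insert_self a _
  have hb : b ∈ ({a, b} : Finset Ω) := mem_insert_of_mem (mem_singleton_self b)
  have hpE : 0 < ∑ ω ∈ {a, b}, p ω := by rwa [sum_pair hab]
  have hqE : 0 < ∑ ω ∈ {a, b}, q ω := by rwa [sum_pair hab]
  rw [← condOn_div_condOn (hpos.sum_apply_pos hmap hp hpE).ne' ha hb,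
    ← condOn_div_condOn (hpos.sum_apply_pos hmap hq hqE).ne' ha hb, ← hcoh p hp _ hpE,
    ← hcoh q hq _ hqE, condOn_pair_eq_of_mul_eq hab hpab.ne' hqab.ne' h]

/-- The odds `φ(p)(a) : φ(p)(b)` for the two-point distribution `p` with odds `t : 1` on `a`
against `b`; by coherence every `p` with these odds gives the same value (`beliefOdds_eq`). -/
noncomputable def beliefOdds (φ : (Ω → ℝ) → Ω → ℝ) (a b : Ω) (t : ℝ) : ℝ :=
  φ (ofWeights (Pi.single a t + Pi.single b 1)) a /
    φ (ofWeights (Pi.single a t + Pi.single b 1)) b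

lemma beliefOdds_eq (hcoh : CoherentBelief φ) (hpos : PositiveBelief φ)
    (hmap : ∀ p, IsDist p → IsDist (φ p)) {p : Ω → ℝ} (hp : IsDist p) {a b : Ω} (hab : a ≠ b)
    (ha : 0 < p a) (hb : 0 < p b) : beliefOdds φ a b (p a / p b) = φ p a / φ p b := by
  set w : Ω → ℝ := Pi.single a (p a / p b) + Pi.single b 1
  have hwa : w a = p a / p b := by simp [w, hab]
  have hwb : w b = 1 := by simp [w, hab.symm]
  have hw : 0 ≤ w := single_add_single_nonneg (by positivity) zero_le_one
  have hsum : 0 < ∑ ω, w ω := sum_weights_pos hw (hwb ▸ one_pos)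
  have hq : IsDist (ofWeights w) := isDist_ofWeights hw hsum
  refine (hcoh.div_eq_div hpos hmap hp hq hab (by positivity) ?_ ?_).symm
  · simp only [ofWeights, ← add_div, hwa, hwb]
    positivity
  · simp only [ofWeights, hwa, hwb]
    field_simp

lemma beliefOdds_ofWeights (hcoh : CoherentBelief φ) (hpos : PositiveBelief φ)
    (hmap : ∀ p, IsDist p → IsDist (φ p)) {w : Ω → ℝ} (hw : 0 ≤ w) {a b : Ω}
    (hab : a ≠ b) (ha : 0 < w a) (hb : 0 < w b) :
    beliefOdds φ a b (w a / w b) = φ (ofWeights w) a / φ (ofWeights w) b := by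
  have hsum : 0 < ∑ ω, w ω := sum_weights_pos hw ha
  rw [← ofWeights_div_ofWeights hsum.ne']
  exact beliefOdds_eq hcoh hpos hmap (isDist_ofWeights hw hsum) hab (div_pos ha hsum)
    (div_pos hb hsum)

lemma beliefOdds_pos (hpos : PositiveBelief φ) (hmap : ∀ p, IsDist p → IsDist (φ p)) {a b : Ω}
    (hab : a ≠ b) {t : ℝ} (ht : 0 < t) : 0 < beliefOdds φ a b t := by
  have hw : 0 ≤ (Pi.single a t + Pi.single b 1 : Ω → ℝ) :=
    single_add_single_nonneg ht.le zero_le_one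
  have hwb : 0 < (Pi.single a t + Pi.single b 1 : Ω → ℝ) b := by simp [hab.symm]
  have hq := isDist_ofWeights hw (sum_weights_pos hw hwb)
  exact div_pos (hpos.apply_pos hmap hq (ofWeights_pos hw (by simpa [hab] using ht)))
    (hpos.apply_pos hmap hq (ofWeights_pos hw hwb))

lemma beliefOdds_mul (hcoh : CoherentBelief φ) (hpos : PositiveBelief φ)
    (hmap : ∀ p, IsDist p → IsDist (φ p)) {a b c : Ω} (hab : a ≠ b) (hac : a ≠ c) (hbc : b ≠ c)
    {t s : ℝ} (ht : 0 < t) (hs : 0 < s) :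
    beliefOdds φ a c (t * s) = beliefOdds φ a b t * beliefOdds φ b c s := by
  set w : Ω → ℝ := Pi.single a (t * s) + Pi.single b s + Pi.single c 1
  have hw : 0 ≤ w :=
    add_nonneg (single_add_single_nonneg (by positivity) hs.le) (Pi.single_nonneg.2 zero_le_one)
  have hwa : w a = t * s := by simp [w, hab, hac]
  have hwb : w b = s := by simp [w, hab.symm, hbc]
  have hwc : w c = 1 := by simp [w, hac.symm, hbc.symm]
  have hwa' : 0 < w a := hwa ▸ mul_pos ht hs
  have hwb' : 0 < w b := hwb ▸ hs
  have hwc' : 0 < w c := hwc ▸ one_pos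
  have hac' := beliefOdds_ofWeights hcoh hpos hmap hw hac hwa' hwc'
  have hab' := beliefOdds_ofWeights hcoh hpos hmap hw hab hwa' hwb'
  have hbc' := beliefOdds_ofWeights hcoh hpos hmap hw hbc hwb' hwc'
  rw [hwa, hwc, div_one] at hac'
  rw [hwa, hwb, mul_div_cancel_right₀ t hs.ne'] at hab'
  rw [hwb, hwc, div_one] at hbc'
  have hq := isDist_ofWeights hw (sum_weights_pos hw hwc')
  rw [hac', hab', hbc', div_mul_div_cancel₀ (hpos.apply_pos hmap hq (ofWeights_pos hw hwb')).ne']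

lemma beliefOdds_inv (hcoh : CoherentBelief φ) (hpos : PositiveBelief φ)
    (hmap : ∀ p, IsDist p → IsDist (φ p)) {a b : Ω} (hab : a ≠ b) {t : ℝ} (ht : 0 < t) :
    beliefOdds φ b a t⁻¹ = (beliefOdds φ a b t)⁻¹ := by
  set w : Ω → ℝ := Pi.single a t + Pi.single b 1
  have hw : 0 ≤ w := single_add_single_nonneg ht.le zero_le_one
  have hwa : w a = t := by simp [w, hab]
  have hwb : w b = 1 := by simp [w, hab.symm]
  have hab' := beliefOdds_ofWeights hcoh hpos hmap hw hab (hwa ▸ ht) (hwb ▸ one_pos)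
  have hba' := beliefOdds_ofWeights hcoh hpos hmap hw hab.symm (hwb ▸ one_pos) (hwa ▸ ht)
  rw [hwa, hwb, div_one] at hab'
  rw [hwa, hwb, one_div] at hba'
  rw [hab', hba', inv_div]

lemma PiMarginal.apply_add_apply_eq {P : Finpartition (univ : Finset Ω)}
    (hmarg : PiMarginal P φ) (hpos : PositiveBelief φ) (hmap : ∀ p, IsDist p → IsDist (φ p))
    {p p' : Ω → ℝ} (hp : IsDist p) (hp' : IsDist p')
    (hcells : ∀ F ∈ P.parts, ∑ ω ∈ F, p ω = ∑ ω ∈ F, p' ω) {E : Finset Ω} (hE : E ∈ P.parts)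
    {a b c : Ω} (ha : a ∈ E) (hb : b ∈ E) (hab : a ≠ b) (hc : c ∉ E)
    (hzero : ∀ ω, ω ≠ a → ω ≠ b → ω ≠ c → p ω = 0) (hzero' : ∀ ω, ω ≠ a → ω ≠ c → p' ω = 0) :
    φ p a + φ p b = φ p' a ∧ φ p c = φ p' c := by
  have hφE : φ p a + φ p b = ∑ ω ∈ E, φ p ω := by
    rw [← sum_pair hab]
    refine hpos.sum_apply_eq_of_subset hp (insert_subset ha (singleton_subset_iff.2 hb)) ?_
    intro ω hωE hω
    simp only [mem_insert, mem_singleton, not_or] at hω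
    exact hzero ω hω.1 hω.2 (ne_of_mem_of_not_mem hωE hc)
  have hφE' : φ p' a = ∑ ω ∈ E, φ p' ω := by
    rw [← sum_singleton (φ p') a]
    exact hpos.sum_apply_eq_of_subset hp' (singleton_subset_iff.2 ha)
      fun ω hωE hω => hzero' ω (by simpa using hω) (ne_of_mem_of_not_mem hωE hc)
  have hcE : {c} ⊆ Eᶜ := by simpa using hc
  have hφc : φ p c = ∑ ω ∈ Eᶜ, φ p ω := by
    rw [← sum_singleton (φ p) c]
    refine hpos.sum_apply_eq_of_subset hp hcE fun ω hω hωc => hzero ω ?_ ?_ (by simpa using hωc)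
    exacts [(ne_of_mem_of_not_mem ha (mem_compl.1 hω)).symm,
      (ne_of_mem_of_not_mem hb (mem_compl.1 hω)).symm]
  have hφc' : φ p' c = ∑ ω ∈ Eᶜ, φ p' ω := by
    rw [← sum_singleton (φ p') c]
    exact hpos.sum_apply_eq_of_subset hp' hcE fun ω hω hωc =>
      hzero' ω (ne_of_mem_of_not_mem ha (mem_compl.1 hω)).symm (by simpa using hωc)
  have hφE_eq := hmarg p p' hp hp' hcells E hE
  refine ⟨by rw [hφE, hφE_eq, hφE'], ?_⟩
  linarith [(hmap p hp).2, (hmap p' hp').2, sum_add_sum_compl E (φ p), sum_add_sum_compl E (φ p')]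

lemma beliefOdds_add_of_mem_part {P : Finpartition (univ : Finset Ω)} (hmarg : PiMarginal P φ)
    (hcoh : CoherentBelief φ) (hpos : PositiveBelief φ) (hmap : ∀ p, IsDist p → IsDist (φ p))
    {E : Finset Ω} (hE : E ∈ P.parts) {a b c : Ω} (ha : a ∈ E) (hb : b ∈ E) (hab : a ≠ b)
    (hc : c ∉ E) {u v : ℝ} (hu : 0 < u) (hv : 0 < v) :
    beliefOdds φ a c (u + v) = beliefOdds φ a c u + beliefOdds φ b c v := by
  have hac : a ≠ c := ne_of_mem_of_not_mem ha hc
  have hbc : b ≠ c := ne_of_mem_of_not_mem hb hc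
  set w : Ω → ℝ := Pi.single a u + Pi.single b v + Pi.single c 1
  set w' : Ω → ℝ := Pi.single a (u + v) + Pi.single c 1
  have hw : 0 ≤ w :=
    add_nonneg (single_add_single_nonneg hu.le hv.le) (Pi.single_nonneg.2 zero_le_one)
  have hw' : 0 ≤ w' := single_add_single_nonneg (by positivity) zero_le_one
  have hwa : w a = u := by simp [w, hab, hac]
  have hwb : w b = v := by simp [w, hab.symm, hbc]
  have hwc : w c = 1 := by simp [w, hac.symm, hbc.symm]
  have hw'a : w' a = u + v := by simp [w', hac]
  have hw'c : w' c = 1 := by simp [w', hac.symm]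
  have hcells : ∀ F ∈ P.parts, ∑ ω ∈ F, ofWeights w ω = ∑ ω ∈ F, ofWeights w' ω := by
    intro F hF
    have hiff : a ∈ F ↔ b ∈ F :=
      ⟨fun h => P.eq_of_mem_parts hF hE h ha ▸ hb, fun h => P.eq_of_mem_parts hF hE h hb ▸ ha⟩
    rw [sum_ofWeights, sum_ofWeights, sum_single_add_single_eq_sum_single hiff,
      sum_single_add_single_eq_sum_single (by simp)]
  obtain ⟨hφab, hφc⟩ := hmarg.apply_add_apply_eq hpos hmap
    (isDist_ofWeights hw (sum_weights_pos hw (hwc ▸ one_pos)))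
    (isDist_ofWeights hw' (sum_weights_pos hw' (hw'c ▸ one_pos))) hcells hE ha hb hab hc
    (fun ω h₁ h₂ h₃ => by simp [ofWeights, w, h₁, h₂, h₃])
    (fun ω h₁ h₃ => by simp [ofWeights, w', h₁, h₃])
  have hodds_ac := beliefOdds_ofWeights hcoh hpos hmap hw hac (hwa ▸ hu) (hwc ▸ one_pos)
  have hodds_bc := beliefOdds_ofWeights hcoh hpos hmap hw hbc (hwb ▸ hv) (hwc ▸ one_pos)
  have hodds_ac' := beliefOdds_ofWeights hcoh hpos hmap hw' hac (hw'a ▸ by positivity)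
    (hw'c ▸ one_pos)
  rw [hwa, hwc, div_one] at hodds_ac
  rw [hwb, hwc, div_one] at hodds_bc
  rw [hw'a, hw'c, div_one] at hodds_ac'
  rw [hodds_ac, hodds_bc, hodds_ac', ← add_div, hφab, hφc]

lemma beliefOdds_eq_of_mem_part {P : Finpartition (univ : Finset Ω)} (hmarg : PiMarginal P φ)
    (hcoh : CoherentBelief φ) (hpos : PositiveBelief φ) (hmap : ∀ p, IsDist p → IsDist (φ p))
    {E : Finset Ω} (hE : E ∈ P.parts) {a b c : Ω} (ha : a ∈ E) (hb : b ∈ E) (hab : a ≠ b)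
    (hc : c ∉ E) {t : ℝ} (ht : 0 < t) : beliefOdds φ a c t = beliefOdds φ b c t := by
  have h₁ := beliefOdds_add_of_mem_part hmarg hcoh hpos hmap hE ha hb hab hc (half_pos ht)
    (half_pos ht)
  have h₂ := beliefOdds_add_of_mem_part hmarg hcoh hpos hmap hE hb ha hab.symm hc (half_pos ht)
    (half_pos ht)
  rw [add_halves] at h₁ h₂
  rw [h₁, h₂, add_comm]

def OddsLinear (φ : (Ω → ℝ) → Ω → ℝ) (a b : Ω) : Prop :=
  ∀ t, 0 < t → beliefOdds φ a b t = t * beliefOdds φ a b 1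

lemma oddsLinear_of_mem_part {P : Finpartition (univ : Finset Ω)} (hmarg : PiMarginal P φ)
    (hcoh : CoherentBelief φ) (hpos : PositiveBelief φ) (hmap : ∀ p, IsDist p → IsDist (φ p))
    {E : Finset Ω} (hE : E ∈ P.parts) {a b c : Ω} (ha : a ∈ E) (hb : b ∈ E) (hab : a ≠ b)
    (hc : c ∉ E) : OddsLinear φ a c := fun _ ht =>
  eq_mul_apply_one_of_add_of_pos
    (fun _ _ hu hv => by
      rw [beliefOdds_add_of_mem_part hmarg hcoh hpos hmap hE ha hb hab hc hu hv,
        beliefOdds_eq_of_mem_part hmarg hcoh hpos hmap hE ha hb hab hc hv])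
    (fun _ hu => beliefOdds_pos hpos hmap (ne_of_mem_of_not_mem ha hc) hu) ht

lemma OddsLinear.of_left (hcoh : CoherentBelief φ) (hpos : PositiveBelief φ)
    (hmap : ∀ p, IsDist p → IsDist (φ p)) {a b c : Ω} (h : OddsLinear φ a c) (hab : a ≠ b)
    (hac : a ≠ c) (hbc : b ≠ c) : OddsLinear φ a b := by
  intro t ht
  have h₁ := beliefOdds_mul hcoh hpos hmap hab hac hbc ht one_pos
  have h₂ := beliefOdds_mul hcoh hpos hmap hab hac hbc one_pos one_pos
  rw [mul_one] at h₁ h₂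
  apply mul_right_cancel₀ (beliefOdds_pos hpos hmap hbc one_pos).ne'
  rw [← h₁, h t ht, h₂, mul_assoc]

lemma OddsLinear.of_right (hcoh : CoherentBelief φ) (hpos : PositiveBelief φ)
    (hmap : ∀ p, IsDist p → IsDist (φ p)) {a b c : Ω} (h : OddsLinear φ a c) (hab : a ≠ b)
    (hac : a ≠ c) (hbc : b ≠ c) : OddsLinear φ b c := by
  intro t ht
  have h₁ := beliefOdds_mul hcoh hpos hmap hab hac hbc one_pos ht
  have h₂ := beliefOdds_mul hcoh hpos hmap hab hac hbc one_pos one_pos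
  rw [one_mul] at h₁ h₂
  apply mul_left_cancel₀ (beliefOdds_pos hpos hmap hab one_pos).ne'
  rw [← h₁, h t ht, h₂]
  ring

lemma OddsLinear.symm (hcoh : CoherentBelief φ) (hpos : PositiveBelief φ)
    (hmap : ∀ p, IsDist p → IsDist (φ p)) {a b : Ω} (h : OddsLinear φ a b) (hab : a ≠ b) :
    OddsLinear φ b a := by
  intro t ht
  have h₁ := beliefOdds_inv hcoh hpos hmap hab (inv_pos.2 ht)
  have h₂ := beliefOdds_inv hcoh hpos hmap hab one_pos
  rw [inv_inv] at h₁
  rw [inv_one] at h₂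
  rw [h₁, h₂, h _ (inv_pos.2 ht), mul_inv, inv_inv]

lemma OddsLinear.of_ne (hcoh : CoherentBelief φ) (hpos : PositiveBelief φ)
    (hmap : ∀ p, IsDist p → IsDist (φ p)) {a c : Ω} (h : OddsLinear φ a c) (hac : a ≠ c)
    {x y : Ω} (hxy : x ≠ y) : OddsLinear φ x y := by
  have hfrom : ∀ y, a ≠ y → OddsLinear φ a y := fun y hay => by
    rcases eq_or_ne y c with rfl | hyc
    exacts [h, h.of_left hcoh hpos hmap hay hac hyc]
  rcases eq_or_ne a x with rfl | hax
  · exact hfrom y hxy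
  rcases eq_or_ne a y with rfl | hay
  · exact (hfrom x hax).symm hcoh hpos hmap hax
  · exact (hfrom y hay).of_right hcoh hpos hmap hax hay hxy

lemma beliefOdds_one (hcoh : CoherentBelief φ) (hpos : PositiveBelief φ)
    (hmap : ∀ p, IsDist p → IsDist (φ p)) {a b : Ω} (hab : a ≠ b) :
    beliefOdds φ a b 1 = φ (ofWeights 1) a / φ (ofWeights 1) b := by
  simpa using beliefOdds_ofWeights hcoh hpos hmap zero_le_one hab one_pos one_pos

lemma isPowerWeighted_of_oddsLinear [Nonempty Ω] (hcoh : CoherentBelief φ)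
    (hpos : PositiveBelief φ) (hmap : ∀ p, IsDist p → IsDist (φ p))
    (hlin : ∀ a b, a ≠ b → OddsLinear φ a b) : IsPowerWeighted φ (φ (ofWeights 1)) 1 := by
  set ψ := φ (ofWeights (1 : Ω → ℝ))
  have hψ : ∀ ω, 0 < ψ ω := fun ω =>
    hpos.apply_pos hmap isDist_ofWeights_one (ofWeights_pos zero_le_one one_pos)
  have hcross : ∀ p, IsDist p → ∀ a b, φ p a * (ψ b * p b) = φ p b * (ψ a * p a) := by
    intro p hp a b
    rcases (hp.1 a).eq_or_lt with ha | ha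
    · rw [← ha, (hpos.apply_eq_zero_iff hp a).2 ha.symm]
      ring
    rcases (hp.1 b).eq_or_lt with hb | hb
    · rw [← hb, (hpos.apply_eq_zero_iff hp b).2 hb.symm]
      ring
    rcases eq_or_ne a b with rfl | hab
    · ring
    have h := beliefOdds_eq hcoh hpos hmap hp hab ha hb
    rw [hlin a b hab _ (div_pos ha hb), beliefOdds_one hcoh hpos hmap hab] at h
    replace h : p a / p b * (ψ a / ψ b) = φ p a / φ p b := h
    rw [div_mul_div_comm, div_eq_div_iff (mul_pos hb (hψ b)).ne'
      (hpos.apply_pos hmap hp hb).ne'] at h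
    linear_combination -h
  refine ⟨hψ, one_pos, fun p hp ω => ?_⟩
  obtain ⟨ω₀, hω₀⟩ := hp.exists_pos
  simp only [Real.rpow_one]
  exact eq_div_sum_of_mul_eq_mul (hmap p hp).2
    (sum_weights_pos (fun ω => mul_nonneg (hψ ω).le (hp.1 ω)) (mul_pos (hψ ω₀) hω₀)).ne'
    (hcross p hp) ω

end Ratio

theorem exists_isPowerWeighted_of_piMarginal {Ω : Type*} [Fintype Ω] [DecidableEq Ω]
    {P : Finpartition (univ : Finset Ω)}
    (hNontrivial : ∃ E ∈ P.parts, 1 < E.card ∧ E.card < Fintype.card Ω)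
    {φ : (Ω → ℝ) → Ω → ℝ} (hmap : ∀ p, IsDist p → IsDist (φ p)) (hpos : PositiveBelief φ)
    (hcoh : CoherentBelief φ) (hmarg : PiMarginal P φ) :
    ∃ ψ, IsPowerWeighted φ ψ 1 ∧ ∀ E ∈ P.parts, ∀ ω ∈ E, ∀ ω' ∈ E, ψ ω = ψ ω' := by
  obtain ⟨E₀, hE₀, hcard₁, hcard⟩ := hNontrivial
  obtain ⟨a, ha, b, hb, hab⟩ := one_lt_card.1 hcard₁
  obtain ⟨c, hc⟩ := P.exists_notMem_of_card_lt hE₀ hcard hE₀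
  have : Nonempty Ω := ⟨a⟩
  have hlin := oddsLinear_of_mem_part hmarg hcoh hpos hmap hE₀ ha hb hab hc
  refine ⟨_, isPowerWeighted_of_oddsLinear hcoh hpos hmap fun x y hxy =>
    hlin.of_ne hcoh hpos hmap (ne_of_mem_of_not_mem ha hc) hxy, ?_⟩
  intro E hE x hx y hy
  rcases eq_or_ne x y with rfl | hxy
  · rfl
  obtain ⟨z, hz⟩ := P.exists_notMem_of_card_lt hE₀ hcard hE
  have h := beliefOdds_eq_of_mem_part hmarg hcoh hpos hmap hE hx hy hxy hz one_pos
  rw [beliefOdds_one hcoh hpos hmap (ne_of_mem_of_not_mem hx hz),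
    beliefOdds_one hcoh hpos hmap (ne_of_mem_of_not_mem hy hz)] at h
  exact (div_left_inj' (hpos.apply_pos hmap isDist_ofWeights_one
    (ofWeights_pos zero_le_one one_pos)).ne').1 h

theorem stmt4_general {Ω : Type*} [Fintype Ω] [DecidableEq Ω]
    (P : Finpartition (Finset.univ : Finset Ω))
    (hNontrivial : ∃ E ∈ P.parts, 1 < E.card ∧ E.card < Fintype.card Ω)
    (φ : (Ω → ℝ) → Ω → ℝ) (hmap : ∀ p, IsDist p → IsDist (φ p)) :
    (PositiveBelief φ ∧ ContinuousOn φ {p | IsDist p} ∧ CoherentBelief φ ∧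
        PiMarginal P φ) ↔
      ∃ (ψ : Ω → ℝ) (α : ℝ), IsPowerWeighted φ ψ α ∧ α = 1 ∧
        ∀ E ∈ P.parts, ∀ ω ∈ E, ∀ ω' ∈ E, ψ ω = ψ ω' := by
  constructor
  · rintro ⟨hpos, -, hcoh, hmarg⟩
    obtain ⟨ψ, hψ, hconst⟩ :=
      exists_isPowerWeighted_of_piMarginal hNontrivial hmap hpos hcoh hmarg
    exact ⟨ψ, 1, hψ, rfl, hconst⟩
  · rintro ⟨ψ, α, hψ, rfl, hconst⟩
    exact ⟨hψ.positiveBelief, hψ.continuousOn, hψ.coherentBelief, hψ.piMarginal hconst⟩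

/-- **Corollary**: for a nontrivial partition `Π` of `Ω` (`|Ω| ≥ 3`), `φ` satisfies
positivity, continuity, coherency and `Π`-marginality iff `φ` is power-weighted with
`α = 1` and `ψ` constant on each cell of `Π`. -/
theorem stmt4 {Ω : Type*} [Fintype Ω] [DecidableEq Ω] (hΩ : 3 ≤ Fintype.card Ω)
    (P : Finpartition (Finset.univ : Finset Ω))
    (hNontrivial : ∃ E ∈ P.parts, 1 < E.card ∧ E.card < Fintype.card Ω)
    (φ : (Ω → ℝ) → Ω → ℝ) (hmap : ∀ p, IsDist p → IsDist (φ p)) :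
    (PositiveBelief φ ∧ ContinuousOn φ {p | IsDist p} ∧ CoherentBelief φ ∧
        PiMarginal P φ) ↔
      ∃ (ψ : Ω → ℝ) (α : ℝ), IsPowerWeighted φ ψ α ∧ α = 1 ∧
        ∀ E ∈ P.parts, ∀ ω ∈ E, ∀ ω' ∈ E, ψ ω = ψ ω' :=
  stmt4_general P hNontrivial φ hmap
end

section
/- Let Ω be a finite set with |Ω| ≥ 3 and let φ : Δ(Ω) → Δ(Ω) be continuous and positive. Then φ is a power-weighted distortion function if and only if φ induces dynamically consistent preferences, i.e. for all full-support p ∈ Δ(Ω), all nonempty E ⊆ Ω, and all f, g, h : Ω → ℝ: V_φ(f_E g; p) ≥ V_φ(h_E g; p) if and only if V_φ(f_E g; p|E) ≥ V_φ(h_E g; p|E). -/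
open Finset

/-- The act `f_E g`: pays according to `f` on `E` and according to `g` off `E`. -/
def actOn {Ω : Type*} [DecidableEq Ω] (f g : Ω → ℝ) (E : Finset Ω) : Ω → ℝ :=
  fun ω => if ω ∈ E then f ω else g ω

/-- `V_φ(f; p) = Σ_ω f(ω)·φ(p)(ω)`: belief-conditional expected utility. -/
def Vdist {Ω : Type*} [Fintype Ω] (φ : (Ω → ℝ) → Ω → ℝ) (f : Ω → ℝ) (p : Ω → ℝ) : ℝ :=
  ∑ ω, f ω * φ p ω

open Filter
set_option linter.unusedSectionVars false
set_option maxHeartbeats 1000000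

section Aux
variable {Ω : Type*} [Fintype Ω] [DecidableEq Ω]

lemma isDist_condOn (p : Ω → ℝ) (hp : IsDist p) (E : Finset Ω) (hT : 0 < ∑ ω ∈ E, p ω) :
    IsDist (condOn p E) := by
  constructor
  · intro ω; unfold condOn; split_ifs
    · exact div_nonneg (hp.1 ω) hT.le
    · exact le_refl 0
  · simp only [condOn]
    rw [Finset.sum_ite_mem, Finset.univ_inter, ← Finset.sum_div, div_self hT.ne']

/-- Binary distribution putting odds `r : 1` on `x` vs `y`. -/
noncomputable def binq (x y : Ω) (r : ℝ) : Ω → ℝ :=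
  fun ω => if ω = x then r / (1 + r) else if ω = y then 1 / (1 + r) else 0

lemma binq_apply_x (x y : Ω) (r : ℝ) : binq x y r x = r / (1 + r) := by simp [binq]

lemma binq_apply_y {x y : Ω} (hxy : x ≠ y) (r : ℝ) : binq x y r y = 1 / (1 + r) := by
  simp [binq, hxy.symm]

lemma isDist_binq {x y : Ω} (hxy : x ≠ y) {r : ℝ} (hr : 0 ≤ r) : IsDist (binq x y r) := by
  have h1 : (0:ℝ) < 1 + r := by linarith
  constructor
  · intro ω; unfold binq; split_ifs <;> positivity
  · rw [← Finset.sum_subset (Finset.subset_univ ({x, y} : Finset Ω))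
      (fun ω _ hω => by
        simp only [Finset.mem_insert, Finset.mem_singleton, not_or] at hω
        simp [binq, hω.1, hω.2])]
    rw [Finset.sum_pair hxy, binq_apply_x, binq_apply_y hxy]
    field_simp
    ring

/-- The distorted odds ratio on the binary distribution `binq x y r`. -/
noncomputable def Fq (φ : (Ω → ℝ) → Ω → ℝ) (x y : Ω) (r : ℝ) : ℝ :=
  φ (binq x y r) x / φ (binq x y r) y

section Deductions
variable (φ : (Ω → ℝ) → Ω → ℝ)
variable (hmap : ∀ p, IsDist p → IsDist (φ p))
variable (hpos : ∀ p, IsDist p → ∀ ω, (φ p ω = 0 ↔ p ω = 0))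

include hmap hpos in
lemma phi_pos {p : Ω → ℝ} (hp : IsDist p) {ω : Ω} (h : 0 < p ω) : 0 < φ p ω := by
  refine lt_of_le_of_ne ((hmap p hp).1 ω) (Ne.symm fun h0 => ?_)
  exact h.ne' ((hpos p hp ω).mp h0)

include hmap hpos in
lemma Fq_pos {x y : Ω} (hxy : x ≠ y) {r : ℝ} (hr : 0 < r) : 0 < Fq φ x y r := by
  have hd := isDist_binq hxy hr.le
  have h1 : (0:ℝ) < 1 + r := by linarith
  have hx : 0 < φ (binq x y r) x := phi_pos φ hmap hpos hd (by rw [binq_apply_x]; positivity)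
  have hy : 0 < φ (binq x y r) y :=
    phi_pos φ hmap hpos hd (by rw [binq_apply_y hxy]; positivity)
  exact div_pos hx hy

lemma Vdist_actOn_zero (f : Ω → ℝ) (E : Finset Ω) (q : Ω → ℝ) :
    Vdist φ (actOn f 0 E) q = ∑ ω ∈ E, f ω * φ q ω := by
  unfold Vdist actOn
  rw [show (∑ ω, (if ω ∈ E then f ω else (0:Ω → ℝ) ω) * φ q ω)
      = ∑ ω, (if ω ∈ E then f ω * φ q ω else 0) from
    Finset.sum_congr rfl (fun ω _ => by split_ifs <;> simp)]
  rw [Finset.sum_ite_mem, Finset.univ_inter]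

variable (hdc : ∀ p, IsDist p → (∀ ω, 0 < p ω) →
        ∀ E : Finset Ω, E.Nonempty → ∀ f g h : Ω → ℝ,
          (Vdist φ (actOn f g E) p ≥ Vdist φ (actOn h g E) p ↔
            Vdist φ (actOn f g E) (condOn p E) ≥
              Vdist φ (actOn h g E) (condOn p E)))

include hmap hpos hdc in
/-- The ratio identity on pairs extracted from dynamic consistency. -/
lemma ratio_pair {p : Ω → ℝ} (hp : IsDist p) (hps : ∀ ω, 0 < p ω) {x y : Ω} (hxy : x ≠ y) :
    φ p x * φ (condOn p {x, y}) y = φ p y * φ (condOn p {x, y}) x := by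
  set E : Finset Ω := {x, y} with hE
  have hxE : x ∈ E := by simp [hE]
  have hyE : y ∈ E := by simp [hE]
  have hEne : E.Nonempty := ⟨x, hxE⟩
  have hT : 0 < ∑ ω ∈ E, p ω := Finset.sum_pos (fun ω _ => hps ω) hEne
  have hq2 : IsDist (condOn p E) := isDist_condOn p hp E hT
  have hu1 : 0 < φ p x := phi_pos φ hmap hpos hp (hps x)
  have hu2 : 0 < φ p y := phi_pos φ hmap hpos hp (hps y)
  have hv1 : 0 < φ (condOn p E) x := by
    refine phi_pos φ hmap hpos hq2 ?_
    unfold condOn; rw [if_pos hxE]; exact div_pos (hps x) hT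
  have hv2 : 0 < φ (condOn p E) y := by
    refine phi_pos φ hmap hpos hq2 ?_
    unfold condOn; rw [if_pos hyE]; exact div_pos (hps y) hT
  have hk : ∀ t : ℝ, (t * φ p x - φ p y ≥ 0 ↔
      t * φ (condOn p E) x - φ (condOn p E) y ≥ 0) := by
    intro t
    have hiff := hdc p hp hps E hEne (fun ω => if ω = x then t else -1) 0 0
    have comp : ∀ q : Ω → ℝ,
        Vdist φ (actOn (fun ω => if ω = x then t else -1) 0 E) q = t * φ q x - φ q y := by
      intro q
      rw [Vdist_actOn_zero, hE, Finset.sum_pair hxy]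
      simp [hxy.symm]
      ring
    have comp0 : ∀ q : Ω → ℝ, Vdist φ (actOn 0 0 E) q = 0 := by
      intro q; rw [Vdist_actOn_zero]; simp
    rw [comp, comp, comp0, comp0] at hiff
    simpa [ge_iff_le, sub_nonneg] using hiff
  have hA : φ p y * φ (condOn p E) x ≥ φ p x * φ (condOn p E) y := by
    have h1 := (hk (φ p y / φ p x)).mp (by rw [div_mul_cancel₀ _ hu1.ne']; linarith)
    rw [ge_iff_le, sub_nonneg, div_mul_eq_mul_div, le_div_iff₀ hu1] at h1
    nlinarith [h1]
  have hB : φ p x * φ (condOn p E) y ≥ φ p y * φ (condOn p E) x := by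
    have h2 := (hk (φ (condOn p E) y / φ (condOn p E) x)).mpr
      (by rw [div_mul_cancel₀ _ hv1.ne']; linarith)
    rw [ge_iff_le, sub_nonneg, div_mul_eq_mul_div, le_div_iff₀ hv1] at h2
    nlinarith [h2]
  linarith

lemma condOn_pair_eq {p : Ω → ℝ} (hps : ∀ ω, 0 < p ω) {x y : Ω} (hxy : x ≠ y) :
    condOn p {x, y} = binq x y (p x / p y) := by
  funext ω
  have hpx := hps x
  have hpy := hps y
  unfold condOn binq
  rw [Finset.sum_pair hxy]
  by_cases hx : ω = x
  · subst hx
    rw [if_pos (by simp), if_pos rfl]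
    rw [show (1 : ℝ) + p ω / p y = (p y + p ω) / p y by field_simp]
    rw [div_div_div_cancel_right₀]
    · ring_nf
    · exact hpy.ne'
  · by_cases hy : ω = y
    · subst hy
      rw [if_pos (by simp), if_neg hx, if_pos rfl]
      rw [show (1 : ℝ) + p x / p ω = (p ω + p x) / p ω by field_simp]
      rw [one_div_div]
      ring_nf
    · rw [if_neg (by simp [hx, hy]), if_neg hx, if_neg hy]

include hmap hpos hdc in
/-- Ratios of distorted beliefs only depend on the corresponding likelihood ratio. -/
lemma ratio_eq {p : Ω → ℝ} (hp : IsDist p) (hps : ∀ ω, 0 < p ω) {x y : Ω} (hxy : x ≠ y) :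
    φ p x / φ p y = Fq φ x y (p x / p y) := by
  have hk := ratio_pair φ hmap hpos hdc hp hps hxy
  rw [condOn_pair_eq hps hxy] at hk
  have hu2 : 0 < φ p y := phi_pos φ hmap hpos hp (hps y)
  have hr : 0 < p x / p y := div_pos (hps x) (hps y)
  have hd := isDist_binq hxy hr.le
  have h1r : (0:ℝ) < 1 + p x / p y := by linarith
  have hv1 : 0 < φ (binq x y (p x / p y)) x :=
    phi_pos φ hmap hpos hd (by rw [binq_apply_x]; positivity)
  have hv2 : 0 < φ (binq x y (p x / p y)) y :=
    phi_pos φ hmap hpos hd (by rw [binq_apply_y hxy]; positivity)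
  unfold Fq
  rw [div_eq_div_iff hu2.ne' hv2.ne']
  linarith [hk]

include hmap hpos hdc in
lemma pexider [Nonempty Ω] {x y z : Ω} (hxy : x ≠ y) (hyz : y ≠ z) (hxz : x ≠ z)
    {r s : ℝ} (hr : 0 < r) (hs : 0 < s) :
    Fq φ x z (r * s) = Fq φ x y r * Fq φ y z s := by
  set w : Ω → ℝ := fun ω => if ω = x then r * s else if ω = y then s else 1 with hw
  have hwpos : ∀ ω, 0 < w ω := by
    intro ω; rw [hw]; dsimp only; split_ifs <;> positivity
  set W := ∑ ω, w ω with hW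
  have hWpos : 0 < W := Finset.sum_pos (fun ω _ => hwpos ω) Finset.univ_nonempty
  set p : Ω → ℝ := fun ω => w ω / W with hp
  have hpdist : IsDist p := ⟨fun ω => div_nonneg (hwpos ω).le hWpos.le, by
    rw [hp]; dsimp only; rw [← Finset.sum_div, div_self hWpos.ne']⟩
  have hppos : ∀ ω, 0 < p ω := fun ω => div_pos (hwpos ω) hWpos
  have hquot : ∀ a b : Ω, p a / p b = w a / w b := by
    intro a b
    rw [hp]; dsimp only
    rw [div_div_div_cancel_right₀]
    exact hWpos.ne'
  have hwx : w x = r * s := by rw [hw]; simp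
  have hwy : w y = s := by rw [hw]; simp [Ne.symm hxy]
  have hwz : w z = 1 := by rw [hw]; simp [Ne.symm hxz, Ne.symm hyz]
  have e1 : p x / p y = r := by
    rw [hquot, hwx, hwy, mul_div_assoc, div_self hs.ne', mul_one]
  have e2 : p y / p z = s := by rw [hquot, hwy, hwz, div_one]
  have e3 : p x / p z = r * s := by rw [hquot, hwx, hwz, div_one]
  have r1 := ratio_eq φ hmap hpos hdc hpdist hppos hxy
  rw [e1] at r1
  have r2 := ratio_eq φ hmap hpos hdc hpdist hppos hyz
  rw [e2] at r2
  have r3 := ratio_eq φ hmap hpos hdc hpdist hppos hxz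
  rw [e3] at r3
  rw [← r1, ← r2, ← r3]
  have hy' : φ p y ≠ 0 := (phi_pos φ hmap hpos hpdist (hppos y)).ne'
  have hz' : φ p z ≠ 0 := (phi_pos φ hmap hpos hpdist (hppos z)).ne'
  field_simp

end Deductions
lemma reverse_dir (hΩ : 3 ≤ Fintype.card Ω) (φ : (Ω → ℝ) → Ω → ℝ)
    (hmap : ∀ p, IsDist p → IsDist (φ p))
    (hcont : ContinuousOn φ {p | IsDist p})
    (hpos : ∀ p, IsDist p → ∀ ω, (φ p ω = 0 ↔ p ω = 0))
    (hdc : ∀ p, IsDist p → (∀ ω, 0 < p ω) →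
        ∀ E : Finset Ω, E.Nonempty → ∀ f g h : Ω → ℝ,
          (Vdist φ (actOn f g E) p ≥ Vdist φ (actOn h g E) p ↔
            Vdist φ (actOn f g E) (condOn p E) ≥
              Vdist φ (actOn h g E) (condOn p E))) :
    ∃ (ψ : Ω → ℝ) (α : ℝ), IsPowerWeighted φ ψ α := by
  haveI hne : Nonempty Ω := Fintype.card_pos_iff.mp (by omega)
  have hthird : ∀ x y : Ω, ∃ z, z ≠ x ∧ z ≠ y := by
    intro x y
    by_contra hc
    push_neg at hc
    have hsub : (Finset.univ : Finset Ω) ⊆ {x, y} := by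
      intro z _
      rcases eq_or_ne z x with h | h
      · simp [h]
      · simp [hc z h]
    have h2 : Fintype.card Ω ≤ 2 :=
      le_trans (Finset.card_le_card hsub)
        (le_trans (Finset.card_insert_le _ _) (by simp))
    omega
  obtain ⟨ω0⟩ := id hne
  obtain ⟨x1, hx1, -⟩ := hthird ω0 ω0
  have hGpos : ∀ x, x ≠ ω0 → ∀ r : ℝ, 0 < r → 0 < Fq φ x ω0 r :=
    fun x hx r hr => Fq_pos φ hmap hpos hx hr
  have hHind : ∀ x, x ≠ ω0 → ∀ s : ℝ, 0 < s →
      Fq φ x ω0 s / Fq φ x ω0 1 = Fq φ x1 ω0 s / Fq φ x1 ω0 1 := by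
    intro x hx s hs
    rcases eq_or_ne x x1 with rfl | hxx1
    · rfl
    · have h1 := pexider φ hmap hpos hdc hxx1 hx1 hx one_pos hs
      have h2 := pexider φ hmap hpos hdc hxx1 hx1 hx one_pos one_pos
      rw [one_mul] at h1 h2
      have hF1 : 0 < Fq φ x x1 1 := Fq_pos φ hmap hpos hxx1 one_pos
      rw [h1, h2, mul_div_mul_left _ _ hF1.ne']
  have hHmul : ∀ r s : ℝ, 0 < r → 0 < s →
      Fq φ x1 ω0 (r * s) / Fq φ x1 ω0 1
        = (Fq φ x1 ω0 r / Fq φ x1 ω0 1) * (Fq φ x1 ω0 s / Fq φ x1 ω0 1) := by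
    intro r s hr hs
    obtain ⟨y, hy1, hy0⟩ := hthird x1 ω0
    have h1 := pexider φ hmap hpos hdc (Ne.symm hy1) hy0 hx1 hr hs
    have h2 := pexider φ hmap hpos hdc (Ne.symm hy1) hy0 hx1 hr one_pos
    rw [mul_one] at h2
    have h3 := hHind y hy0 s hs
    have hy1pos : 0 < Fq φ y ω0 1 := hGpos y hy0 1 one_pos
    have hys : 0 < Fq φ y ω0 s := hGpos y hy0 s hs
    have hFxy : Fq φ x1 y r = Fq φ x1 ω0 r / Fq φ y ω0 1 := by
      rw [h2]; field_simp
    rw [h1, hFxy]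
    rw [show Fq φ y ω0 s = (Fq φ x1 ω0 s / Fq φ x1 ω0 1) * Fq φ y ω0 1 from by
      rw [← h3]; field_simp]
    have hC1 : Fq φ x1 ω0 1 ≠ 0 := (hGpos x1 hx1 1 one_pos).ne'
    field_simp [hy1pos.ne', hC1]
  set C := Fq φ x1 ω0 1 with hC
  have hCpos : 0 < C := hGpos x1 hx1 1 one_pos
  set Hf : ℝ → ℝ := fun r => Fq φ x1 ω0 r / C with hHf
  have hHfpos : ∀ t : ℝ, 0 < t → 0 < Hf t := fun t ht => div_pos (hGpos x1 hx1 t ht) hCpos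
  -- continuity
  have hbc : ContinuousOn (fun r : ℝ => binq x1 ω0 r) (Set.Ici 0) := by
    rw [continuousOn_pi]
    intro ω
    have hden : ∀ r : ℝ, r ∈ Set.Ici (0:ℝ) → (1 : ℝ) + r ≠ 0 := by
      intro r hr
      simp only [Set.mem_Ici] at hr
      nlinarith
    by_cases h : ω = x1
    · simp only [binq, if_pos h]
      exact ContinuousOn.div continuousOn_id (by fun_prop) hden
    · by_cases h2 : ω = ω0
      · simp only [binq, if_neg h, if_pos h2]
        exact ContinuousOn.div continuousOn_const (by fun_prop) hden
      · simp only [binq, if_neg h, if_neg h2]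
        exact continuousOn_const
  have hbinmem : ∀ r : ℝ, 0 ≤ r → binq x1 ω0 r ∈ {p : Ω → ℝ | IsDist p} :=
    fun r hr => isDist_binq hx1 hr
  have hφbc : ContinuousOn (fun r : ℝ => φ (binq x1 ω0 r)) (Set.Ici 0) :=
    hcont.comp hbc (fun r hr => hbinmem r hr)
  have hφbinpos : ∀ r : ℝ, 0 < r →
      0 < φ (binq x1 ω0 r) x1 ∧ 0 < φ (binq x1 ω0 r) ω0 := by
    intro r hr
    have h1 : (0:ℝ) < 1 + r := by linarith
    have hd := isDist_binq hx1 hr.le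
    exact ⟨phi_pos φ hmap hpos hd (by rw [binq_apply_x]; positivity),
      phi_pos φ hmap hpos hd (by rw [binq_apply_y hx1]; positivity)⟩
  have hLcont : Continuous (fun u : ℝ => Real.log (Hf (Real.exp u))) := by
    rw [continuous_iff_continuousAt]
    intro u
    have hepos : 0 < Real.exp u := Real.exp_pos u
    have hIci : Set.Ici (0:ℝ) ∈ nhds (Real.exp u) :=
      Filter.mem_of_superset (Ioi_mem_nhds hepos) Set.Ioi_subset_Ici_self
    have hca : ContinuousAt (fun r : ℝ => φ (binq x1 ω0 r)) (Real.exp u) :=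
      hφbc.continuousAt hIci
    have hcax : ContinuousAt (fun r : ℝ => φ (binq x1 ω0 r) x1) (Real.exp u) :=
      ((continuous_apply x1).continuousAt).comp hca
    have hcay : ContinuousAt (fun r : ℝ => φ (binq x1 ω0 r) ω0) (Real.exp u) :=
      ((continuous_apply ω0).continuousAt).comp hca
    have hdny : φ (binq x1 ω0 (Real.exp u)) ω0 ≠ 0 := (hφbinpos _ hepos).2.ne'
    have hFqca : ContinuousAt (fun r : ℝ => Fq φ x1 ω0 r) (Real.exp u) := hcax.div hcay hdny
    have hHfca : ContinuousAt Hf (Real.exp u) := hFqca.div_const C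
    have hcomp : ContinuousAt (fun u : ℝ => Hf (Real.exp u)) u :=
      hHfca.comp Real.continuous_exp.continuousAt
    have hlg : ContinuousAt (fun v : ℝ => Real.log (Hf v)) (Real.exp u) :=
      (Real.continuousAt_log (hHfpos _ hepos).ne').comp hHfca
    exact hlg.comp Real.continuous_exp.continuousAt
  have hLadd : ∀ u v : ℝ, Real.log (Hf (Real.exp (u + v)))
      = Real.log (Hf (Real.exp u)) + Real.log (Hf (Real.exp v)) := by
    intro u v
    have hm := hHmul (Real.exp u) (Real.exp v) (Real.exp_pos u) (Real.exp_pos v)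
    rw [Real.exp_add]
    rw [show Hf (Real.exp u * Real.exp v) = Hf (Real.exp u) * Hf (Real.exp v) from hm]
    exact Real.log_mul (hHfpos _ (Real.exp_pos u)).ne' (hHfpos _ (Real.exp_pos v)).ne'
  set α := Real.log (Hf (Real.exp 1)) with hαdef
  have hlin : ∀ u : ℝ, Real.log (Hf (Real.exp u)) = u * α := by
    intro u
    have h := (AddMonoidHom.toRealLinearMap (AddMonoidHom.mk' _ hLadd) hLcont).map_smul u 1
    simp only [AddMonoidHom.coe_toRealLinearMap, AddMonoidHom.mk'_apply, smul_eq_mul,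
      mul_one] at h
    exact h
  have hHpow : ∀ t : ℝ, 0 < t → Hf t = t ^ α := by
    intro t ht
    have h1 : Real.log (Hf t) = Real.log t * α := by
      have h2 := hlin (Real.log t)
      rwa [Real.exp_log ht] at h2
    rw [Real.rpow_def_of_pos ht, ← h1, Real.exp_log (hHfpos t ht)]
  -- α is positive
  have hq0 : IsDist (binq x1 ω0 0) := isDist_binq hx1 le_rfl
  have hb0x : binq x1 ω0 0 x1 = 0 := by simp [binq]
  have hb0y : binq x1 ω0 0 ω0 = 1 := by simp [binq, Ne.symm hx1]
  have hφ0x : φ (binq x1 ω0 0) x1 = 0 := (hpos _ hq0 x1).mpr hb0x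
  have hφ0y : 0 < φ (binq x1 ω0 0) ω0 :=
    phi_pos φ hmap hpos hq0 (by rw [hb0y]; norm_num)
  have htn : Filter.Tendsto (fun n : ℕ => (1:ℝ)/(n+1)) Filter.atTop (nhds 0) :=
    tendsto_one_div_add_atTop_nhds_zero_nat
  have htnpos : ∀ n : ℕ, (0:ℝ) < 1/(n+1) := fun n => by positivity
  have hbq_tend : Filter.Tendsto (fun n : ℕ => binq x1 ω0 (1/(n+1))) Filter.atTop
      (nhds (binq x1 ω0 0)) := by
    rw [tendsto_pi_nhds]
    intro ω
    by_cases h : ω = x1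
    · simp only [binq, if_pos h]
      have h5 : Filter.Tendsto (fun n : ℕ => (1/((n:ℝ)+1)) / (1 + 1/((n:ℝ)+1)))
          Filter.atTop (nhds (0/(1+0))) :=
        htn.div (tendsto_const_nhds.add htn) (by norm_num)
      simpa using h5
    · by_cases h2 : ω = ω0
      · simp only [binq, if_neg h, if_pos h2]
        have h5 : Filter.Tendsto (fun n : ℕ => (1:ℝ) / (1 + 1/((n:ℝ)+1)))
            Filter.atTop (nhds (1/(1+0))) :=
          tendsto_const_nhds.div (tendsto_const_nhds.add htn) (by norm_num)
        simpa using h5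
      · simp only [binq, if_neg h, if_neg h2]
        exact tendsto_const_nhds
  have hφ_tend : Filter.Tendsto (fun n : ℕ => φ (binq x1 ω0 (1/(n+1)))) Filter.atTop
      (nhds (φ (binq x1 ω0 0))) := by
    have hcw : ContinuousWithinAt φ {p : Ω → ℝ | IsDist p} (binq x1 ω0 0) := hcont _ hq0
    exact hcw.tendsto.comp (tendsto_nhdsWithin_iff.mpr
      ⟨hbq_tend, Filter.Eventually.of_forall (fun n => hbinmem _ (htnpos n).le)⟩)
  have hx_tend : Filter.Tendsto (fun n : ℕ => φ (binq x1 ω0 (1/(n+1))) x1) Filter.atTop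
      (nhds 0) := by
    have h5 := ((continuous_apply x1).tendsto _).comp hφ_tend
    simpa [hφ0x, Function.comp_def] using h5
  have hy_tend : Filter.Tendsto (fun n : ℕ => φ (binq x1 ω0 (1/(n+1))) ω0) Filter.atTop
      (nhds (φ (binq x1 ω0 0) ω0)) := ((continuous_apply ω0).tendsto _).comp hφ_tend
  have hH_tend : Filter.Tendsto (fun n : ℕ => Hf (1/(n+1))) Filter.atTop (nhds 0) := by
    have h5 := (hx_tend.div hy_tend hφ0y.ne').div_const C
    simpa [hHf, Fq] using h5
  have hαpos : 0 < α := by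
    by_contra hcon
    push_neg at hcon
    have hge : ∀ n : ℕ, (1:ℝ) ≤ Hf (1/(n+1)) := by
      intro n
      rw [hHpow _ (htnpos n)]
      refine Real.one_le_rpow_of_pos_of_le_one_of_nonpos (htnpos n) ?_ hcon
      rw [div_le_one (by positivity)]
      linarith [(Nat.cast_nonneg n : (0:ℝ) ≤ n)]
    have h6 := ge_of_tendsto' hH_tend hge
    linarith
  -- the weights
  set ψ : Ω → ℝ := fun x => if x = ω0 then 1 else Fq φ x ω0 1 with hψdef
  have hψpos : ∀ x, 0 < ψ x := by
    intro x; rw [hψdef]; dsimp only; split_ifs with h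
    · norm_num
    · exact hGpos x h 1 one_pos
  have hGval : ∀ x, x ≠ ω0 → ∀ r : ℝ, 0 < r → Fq φ x ω0 r = ψ x * r ^ α := by
    intro x hx r hr
    have h1 := hHind x hx r hr
    have h2 : Fq φ x1 ω0 r / C = r ^ α := hHpow r hr
    have hx1pos : 0 < Fq φ x ω0 1 := hGpos x hx 1 one_pos
    have hψx : ψ x = Fq φ x ω0 1 := by rw [hψdef]; simp [hx]
    have h3 : Fq φ x ω0 r = (r ^ α) * Fq φ x ω0 1 := by
      rw [← h2, ← h1]
      field_simp
    rw [h3, hψx]; ring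
  -- the formula on full-support distributions
  have hfull : ∀ p, IsDist p → (∀ ω, 0 < p ω) → ∀ x,
      φ p x = ψ x * p x ^ α / ∑ x', ψ x' * p x' ^ α := by
    intro p hp hps
    have hφps : ∀ ω, 0 < φ p ω := fun ω => phi_pos φ hmap hpos hp (hps ω)
    have hc1 : ∀ x, φ p x = (φ p ω0 / p ω0 ^ α) * (ψ x * p x ^ α) := by
      intro x
      rcases eq_or_ne x ω0 with rfl | hx
      · have hψω0 : ψ x = 1 := by rw [hψdef]; simp
        rw [hψω0]
        have hne := (Real.rpow_pos_of_pos (hps x) α).ne'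
        field_simp
      · have h1 := ratio_eq φ hmap hpos hdc hp hps hx
        rw [hGval x hx _ (div_pos (hps x) (hps ω0)),
          Real.div_rpow (hps x).le (hps ω0).le] at h1
        rw [div_eq_iff (hφps ω0).ne'] at h1
        rw [h1]; ring
    have hS : 0 < ∑ x', ψ x' * p x' ^ α :=
      Finset.sum_pos (fun x _ => mul_pos (hψpos x) (Real.rpow_pos_of_pos (hps x) α))
        Finset.univ_nonempty
    have hsum : (φ p ω0 / p ω0 ^ α) * ∑ x', ψ x' * p x' ^ α = 1 := by
      calc (φ p ω0 / p ω0 ^ α) * ∑ x', ψ x' * p x' ^ α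
          = ∑ x', (φ p ω0 / p ω0 ^ α) * (ψ x' * p x' ^ α) := Finset.mul_sum _ _ _
        _ = ∑ x', φ p x' := Finset.sum_congr rfl (fun x _ => (hc1 x).symm)
        _ = 1 := (hmap p hp).2
    intro x
    rw [hc1 x, eq_div_iff hS.ne']
    calc (φ p ω0 / p ω0 ^ α) * (ψ x * p x ^ α) * (∑ x', ψ x' * p x' ^ α)
        = (ψ x * p x ^ α) * ((φ p ω0 / p ω0 ^ α) * ∑ x', ψ x' * p x' ^ α) := by ring
      _ = ψ x * p x ^ α := by rw [hsum, mul_one]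
  -- extend to the boundary by continuity
  refine ⟨ψ, α, hψpos, hαpos, ?_⟩
  intro p hp x
  set N : ℝ := (Fintype.card Ω : ℝ) with hN
  have hNpos : 0 < N := by rw [hN]; exact_mod_cast Fintype.card_pos
  set pn : ℕ → Ω → ℝ := fun n ω => (1 - 1/(n+1)) * p ω + (1/(n+1)) * (1/N) with hpn
  have hεle : ∀ n : ℕ, (1:ℝ)/(n+1) ≤ 1 := by
    intro n
    rw [div_le_one (by positivity)]
    linarith [(Nat.cast_nonneg n : (0:ℝ) ≤ n)]
  have hdistn : ∀ n, IsDist (pn n) := by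
    intro n
    constructor
    · intro ω
      have h1 : (0:ℝ) ≤ 1 - 1/(n+1) := by linarith [hεle n]
      exact add_nonneg (mul_nonneg h1 (hp.1 ω)) (by positivity)
    · rw [hpn]; dsimp only
      rw [Finset.sum_add_distrib, ← Finset.mul_sum, hp.2, Finset.sum_const,
        Finset.card_univ, nsmul_eq_mul, ← hN]
      field_simp
      ring
  have hposn : ∀ n ω, 0 < pn n ω := by
    intro n ω
    have h1 : (0:ℝ) ≤ 1 - 1/(n+1) := by linarith [hεle n]
    exact add_pos_of_nonneg_of_pos (mul_nonneg h1 (hp.1 ω)) (by positivity)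
  have happ : ∀ n, φ (pn n) x = ψ x * pn n x ^ α / ∑ x', ψ x' * pn n x' ^ α :=
    fun n => hfull (pn n) (hdistn n) (hposn n) x
  have hεtend : Filter.Tendsto (fun n : ℕ => (1:ℝ)/(n+1)) Filter.atTop (nhds 0) :=
    tendsto_one_div_add_atTop_nhds_zero_nat
  have hpn_tend : Filter.Tendsto pn Filter.atTop (nhds p) := by
    rw [tendsto_pi_nhds]
    intro ω
    have h5 : Filter.Tendsto (fun n : ℕ => (1 - 1/((n:ℝ)+1)) * p ω + (1/((n:ℝ)+1)) * (1/N))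
        Filter.atTop (nhds ((1 - 0) * p ω + 0 * (1/N))) :=
      ((tendsto_const_nhds.sub hεtend).mul tendsto_const_nhds).add
        (hεtend.mul tendsto_const_nhds)
    simpa [hpn] using h5
  have hcoord : ∀ ω : Ω, Filter.Tendsto (fun n => pn n ω) Filter.atTop (nhds (p ω)) :=
    fun ω => tendsto_pi_nhds.mp hpn_tend ω
  have hφtendn : Filter.Tendsto (fun n => φ (pn n) x) Filter.atTop (nhds (φ p x)) := by
    have hcw : ContinuousWithinAt φ {q : Ω → ℝ | IsDist q} p := hcont _ hp
    exact ((continuous_apply x).tendsto _).comp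
      (hcw.tendsto.comp (tendsto_nhdsWithin_iff.mpr
        ⟨hpn_tend, Filter.Eventually.of_forall (fun n => hdistn n)⟩))
  have hrpow_tend : ∀ ω : Ω, Filter.Tendsto (fun n => pn n ω ^ α) Filter.atTop
      (nhds (p ω ^ α)) := by
    intro ω
    exact ((Real.continuousAt_rpow_const (p ω) α (Or.inr hαpos.le)).tendsto).comp (hcoord ω)
  have hSlim : Filter.Tendsto (fun n => ∑ x', ψ x' * pn n x' ^ α) Filter.atTop
      (nhds (∑ x', ψ x' * p x' ^ α)) :=
    tendsto_finset_sum _ (fun ω _ => tendsto_const_nhds.mul (hrpow_tend ω))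
  have hpex : ∃ ω, 0 < p ω := by
    by_contra hcon
    push_neg at hcon
    have h7 : ∑ ω, p ω = 0 :=
      Finset.sum_eq_zero (fun ω _ => le_antisymm (hcon ω) (hp.1 ω))
    rw [hp.2] at h7
    norm_num at h7
  obtain ⟨ωp, hωp⟩ := hpex
  have hSp : 0 < ∑ x', ψ x' * p x' ^ α :=
    Finset.sum_pos' (fun ω _ => mul_nonneg (hψpos ω).le (Real.rpow_nonneg (hp.1 ω) α))
      ⟨ωp, Finset.mem_univ _, mul_pos (hψpos ωp) (Real.rpow_pos_of_pos hωp α)⟩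
  have hRHS : Filter.Tendsto (fun n => ψ x * pn n x ^ α / ∑ x', ψ x' * pn n x' ^ α)
      Filter.atTop (nhds (ψ x * p x ^ α / ∑ x', ψ x' * p x' ^ α)) :=
    (tendsto_const_nhds.mul (hrpow_tend x)).div hSlim hSp.ne'
  exact tendsto_nhds_unique hφtendn (hRHS.congr (fun n => (happ n).symm))


lemma Vdist_sub (φ : (Ω → ℝ) → Ω → ℝ) (f g h : Ω → ℝ) (E : Finset Ω) (q : Ω → ℝ) :
    Vdist φ (actOn f g E) q - Vdist φ (actOn h g E) q = ∑ ω ∈ E, (f ω - h ω) * φ q ω := by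
  unfold Vdist actOn
  rw [← Finset.sum_sub_distrib]
  rw [show (∑ ω, ((if ω ∈ E then f ω else g ω) * φ q ω - (if ω ∈ E then h ω else g ω) * φ q ω))
      = ∑ ω, (if ω ∈ E then (f ω - h ω) * φ q ω else 0) from
    Finset.sum_congr rfl (fun ω _ => by split_ifs <;> ring)]
  rw [Finset.sum_ite_mem, Finset.univ_inter]

lemma forward_dir (φ : (Ω → ℝ) → Ω → ℝ) (ψ : Ω → ℝ) (α : ℝ)
    (hpw : IsPowerWeighted φ ψ α) :
    ∀ p, IsDist p → (∀ ω, 0 < p ω) →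
      ∀ E : Finset Ω, E.Nonempty → ∀ f g h : Ω → ℝ,
        (Vdist φ (actOn f g E) p ≥ Vdist φ (actOn h g E) p ↔
          Vdist φ (actOn f g E) (condOn p E) ≥ Vdist φ (actOn h g E) (condOn p E)) := by
  obtain ⟨hψ, hα, hφ⟩ := hpw
  intro p hp hps E hE f g h
  have hT : 0 < ∑ ω ∈ E, p ω := Finset.sum_pos (fun ω _ => hps ω) hE
  have hq2 : IsDist (condOn p E) := isDist_condOn p hp E hT
  have hS : 0 < ∑ ω', ψ ω' * p ω' ^ α :=
    Finset.sum_pos (fun ω _ => mul_pos (hψ ω) (Real.rpow_pos_of_pos (hps ω) α))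
      ⟨hE.choose, Finset.mem_univ _⟩
  have hSE : 0 < ∑ ω ∈ E, ψ ω * p ω ^ α :=
    Finset.sum_pos (fun ω _ => mul_pos (hψ ω) (Real.rpow_pos_of_pos (hps ω) α)) hE
  have hTα : (0:ℝ) < (∑ ω ∈ E, p ω) ^ α := Real.rpow_pos_of_pos hT α
  set K := ∑ ω ∈ E, (f ω - h ω) * (ψ ω * p ω ^ α) with hK
  have c1 : Vdist φ (actOn f g E) p - Vdist φ (actOn h g E) p
      = K / ∑ ω', ψ ω' * p ω' ^ α := by
    rw [Vdist_sub, hK, Finset.sum_div]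
    refine Finset.sum_congr rfl (fun ω _ => ?_)
    rw [hφ p hp ω]; ring
  have hS2 : (∑ ω', ψ ω' * condOn p E ω' ^ α)
      = (∑ ω ∈ E, ψ ω * p ω ^ α) / (∑ ω ∈ E, p ω) ^ α := by
    rw [show (∑ ω', ψ ω' * condOn p E ω' ^ α)
        = ∑ ω', (if ω' ∈ E then ψ ω' * p ω' ^ α / (∑ ω ∈ E, p ω) ^ α else 0) from
      Finset.sum_congr rfl (fun ω _ => by
        unfold condOn; split_ifs
        · rw [Real.div_rpow (hp.1 ω) hT.le, mul_div_assoc]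
        · rw [Real.zero_rpow hα.ne', mul_zero])]
    rw [Finset.sum_ite_mem, Finset.univ_inter, Finset.sum_div]
  have hcOn : ∀ ω ∈ E, φ (condOn p E) ω = ψ ω * p ω ^ α / ∑ ω ∈ E, ψ ω * p ω ^ α := by
    intro ω hω
    rw [hφ _ hq2 ω, hS2]
    unfold condOn
    rw [if_pos hω, Real.div_rpow (hp.1 ω) hT.le]
    field_simp
  have c2 : Vdist φ (actOn f g E) (condOn p E) - Vdist φ (actOn h g E) (condOn p E)
      = K / ∑ ω ∈ E, ψ ω * p ω ^ α := by
    rw [Vdist_sub, hK, Finset.sum_div]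
    refine Finset.sum_congr rfl (fun ω hω => ?_)
    rw [hcOn ω hω]; ring
  have e1 : (0:ℝ) ≤ K / (∑ ω', ψ ω' * p ω' ^ α) ↔
      Vdist φ (actOn h g E) p ≤ Vdist φ (actOn f g E) p := by
    rw [← c1]; exact sub_nonneg
  have e2 : (0:ℝ) ≤ K / (∑ ω ∈ E, ψ ω * p ω ^ α) ↔
      Vdist φ (actOn h g E) (condOn p E) ≤ Vdist φ (actOn f g E) (condOn p E) := by
    rw [← c2]; exact sub_nonneg
  simp only [ge_iff_le]
  rw [← e1, ← e2, le_div_iff₀ hS, le_div_iff₀ hSE, zero_mul, zero_mul]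

end Aux

/-- **Proposition (dynamic consistency)**: for `|Ω| ≥ 3` and `φ` continuous and
positive, `φ` is a power-weighted distortion function iff the induced
belief-conditional expected-utility preferences are dynamically consistent. -/
theorem stmt13 {Ω : Type*} [Fintype Ω] [DecidableEq Ω] (hΩ : 3 ≤ Fintype.card Ω)
    (φ : (Ω → ℝ) → Ω → ℝ)
    (hmap : ∀ p, IsDist p → IsDist (φ p))
    (hcont : ContinuousOn φ {p | IsDist p})
    (hpos : ∀ p, IsDist p → ∀ ω, (φ p ω = 0 ↔ p ω = 0)) :
    (∃ (ψ : Ω → ℝ) (α : ℝ), IsPowerWeighted φ ψ α) ↔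
      (∀ p, IsDist p → (∀ ω, 0 < p ω) →
        ∀ E : Finset Ω, E.Nonempty → ∀ f g h : Ω → ℝ,
          (Vdist φ (actOn f g E) p ≥ Vdist φ (actOn h g E) p ↔
            Vdist φ (actOn f g E) (condOn p E) ≥
              Vdist φ (actOn h g E) (condOn p E))) := by
  constructor
  · rintro ⟨ψ, α, hpw⟩
    exact forward_dir φ ψ α hpw
  · intro hdc
    exact reverse_dir hΩ φ hmap hcont hpos hdc
end
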